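/- Let W be a [0,1]-valued random variable with P(W = 1) < 1, and set a_q = E[ (1−W)^q ] for real q ≥ 0 (so a_q > 0 and q ↦ a_q is nonincreasing). Then Σ_{n=2}^∞ 1/( n(n−1) a_{n−2} ) < ∞ if and only if ∫_1^∞ dq / ( q² a_q ) < ∞. Consequently, the death process with rates λ_n = (n/2)( (n−1) a_{n−2} + θ ), θ ≥ 0, satisfies Σ_{n≥2} λ_n^{−1} < ∞ if and only if ∫_1^∞ dq/(q² a_q) < ∞. -/

import Mathlib

open MeasureTheory Set ENNReal

/-- `a_q = E[(1-W)^q]` for real `q`, with the convention `0^0 = 1` (as for `Real.rpow`). -/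
noncomputable def aMom {Ω : Type*} [MeasurableSpace Ω] (ℙ : Measure Ω) (W : Ω → ℝ)
    (q : ℝ) : ℝ :=
  ∫ ω, (1 - W ω) ^ q ∂ℙ

open Filter

/-!
On `[n + 1, n + 2)` the integrand `1 / (q² a_q)` lies between the `(n + 1)`-st term of the series
and 12 times its `(n + 2)`-nd term, because `a` is nonincreasing. For the death rates,
`1 / λ_{n+2}` is at most twice the `n`-th term of the series, and at least that term once
`(n + 1) a_n ≥ θ`. If instead `(n + 1) a_n < θ` for infinitely many `n`, monotonicity gives
`1 / λ_{i+2} ≥ 1 / (3 θ (n + 1))` for `n ≤ i ≤ 2n`, so infinitely many tails of `Σ 1 / λ`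
exceed `1 / (3 θ)` and that series diverges.
-/

lemma lintegral_Ici_one_eq_tsum_Ico (μ : Measure ℝ) (f : ℝ → ℝ≥0∞) :
    ∫⁻ q in Ici 1, f q ∂μ = ∑' n : ℕ, ∫⁻ q in Ico ((n : ℝ) + 1) (n + 2), f q ∂μ := by
  have hmono : Monotone fun n : ℕ => (n : ℝ) + 1 := fun m n h => by simpa using h
  have hunion : ⋃ n : ℕ, Ico ((n : ℝ) + 1) (n + 2) = Ici 1 := by
    have hunb : ¬BddAbove (range fun n : ℕ => (n : ℝ) + 1) := by
      rintro ⟨b, hb⟩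
      obtain ⟨n, hn⟩ := exists_nat_gt b
      linarith [hb ⟨n, rfl⟩]
    simpa [add_assoc, one_add_one_eq_two] using
      iUnion_Ico_map_succ_eq_Ici (fun n => hmono bot_le) hunb
  have hdisj : Pairwise (Function.onFun Disjoint fun n : ℕ => Ico ((n : ℝ) + 1) (n + 2)) := by
    simpa [Order.succ_eq_add_one, add_assoc, one_add_one_eq_two] using
      hmono.pairwise_disjoint_on_Ico_succ
  rw [← hunion, lintegral_iUnion (fun n => measurableSet_Ico) hdisj]

namespace ENNReal

lemma tsum_eq_top_of_frequently_le_sum_range_add {f : ℕ → ℝ≥0∞} {c : ℝ≥0∞} (hc : c ≠ 0)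
    (h : ∃ᶠ n in atTop, ∃ m, c ≤ ∑ i ∈ Finset.range m, f (i + n)) : ∑' n, f n = ⊤ := by
  by_contra hf
  have htail : ∀ᶠ n in atTop, ∑' i, f (i + n) < c :=
    (tendsto_sum_nat_add f hf).eventually (gt_mem_nhds (pos_iff_ne_zero.2 hc))
  obtain ⟨n, ⟨m, hm⟩, hn⟩ := (h.and_eventually htail).exists
  exact (hm.trans (ENNReal.sum_le_tsum _)).not_gt hn

lemma tsum_ne_top_of_eventually_le {f g : ℕ → ℝ≥0∞} (hf : ∀ n, f n ≠ ⊤)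
    (hfg : ∀ᶠ n in atTop, f n ≤ g n) (hg : ∑' n, g n ≠ ⊤) : ∑' n, f n ≠ ⊤ := by
  obtain ⟨N, hN⟩ := eventually_atTop.1 hfg
  rw [← Summable.sum_add_tsum_nat_add' (f := f) (k := N) ENNReal.summable]
  refine add_ne_top.2 ⟨sum_ne_top.2 fun n _ => hf n, ne_top_of_le_ne_top hg ?_⟩
  calc ∑' n, f (n + N) ≤ ∑' n, g (n + N) :=
        ENNReal.tsum_le_tsum fun n => hN _ (Nat.le_add_left N n)
    _ ≤ ∑' n, g n := tsum_comp_le_tsum_of_injective (add_left_injective N) g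

end ENNReal

section IntegralTest

variable {a : ℝ → ℝ}

lemma one_div_le_one_div_sq_mul_of_mem_Ico (hpos : ∀ q, 1 ≤ q → 0 < a q)
    (hanti : AntitoneOn a (Ici 1)) {n : ℕ} {q : ℝ} (hq : q ∈ Ico ((n : ℝ) + 1) (n + 2)) :
    1 / (((n + 1 : ℕ) + 2) * ((n + 1 : ℕ) + 1) * a (n + 1 : ℕ)) ≤ 1 / (q ^ 2 * a q) := by
  have hq1 : 1 ≤ q := by linarith [hq.1]
  have haq : a q ≤ a ((n : ℝ) + 1) := hanti (by rw [mem_Ici]; linarith) hq1 hq.1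
  refine one_div_le_one_div_of_le (mul_pos (by positivity) (hpos q hq1)) ?_
  push_cast
  have hq2 : q ^ 2 ≤ ((n : ℝ) + 1 + 2) * (n + 1 + 1) := by nlinarith [hq.2]
  exact mul_le_mul hq2 haq (hpos q hq1).le (by positivity)

lemma one_div_sq_mul_le_of_mem_Ico (hpos : ∀ q, 1 ≤ q → 0 < a q)
    (hanti : AntitoneOn a (Ici 1)) {n : ℕ} {q : ℝ} (hq : q ∈ Ico ((n : ℝ) + 1) (n + 2)) :
    1 / (q ^ 2 * a q) ≤ 12 * (1 / (((n + 2 : ℕ) + 2) * ((n + 2 : ℕ) + 1) * a (n + 2 : ℕ))) := by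
  have hn : (0 : ℝ) ≤ n := n.cast_nonneg
  have hq1 : 1 ≤ q := by linarith [hq.1]
  push_cast
  have ha : 0 < a (n + 2) := hpos _ (by linarith)
  have haq : a (n + 2) ≤ a q := hanti hq1 (by rw [mem_Ici]; linarith) hq.2.le
  rw [mul_one_div, div_le_div_iff₀ (mul_pos (by positivity) (hpos q hq1)) (by positivity)]
  have hq2 : ((n : ℝ) + 1) ^ 2 ≤ q ^ 2 := by nlinarith [hq.1]
  calc 1 * ((n + 2 + 2) * (n + 2 + 1) * a (n + 2)) ≤ 12 * ((n + 1) ^ 2 * a (n + 2)) := by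
        nlinarith [mul_nonneg hn ha.le, mul_nonneg (mul_nonneg hn hn) ha.le]
    _ ≤ 12 * (q ^ 2 * a q) := by gcongr

lemma ofReal_le_setLIntegral_Ico (hpos : ∀ q, 1 ≤ q → 0 < a q)
    (hanti : AntitoneOn a (Ici 1)) (n : ℕ) :
    ENNReal.ofReal (1 / (((n + 1 : ℕ) + 2) * ((n + 1 : ℕ) + 1) * a (n + 1 : ℕ))) ≤
      ∫⁻ q in Ico ((n : ℝ) + 1) (n + 2), ENNReal.ofReal (1 / (q ^ 2 * a q)) := by
  calc _ = ∫⁻ _ in Ico ((n : ℝ) + 1) (n + 2),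
        ENNReal.ofReal (1 / (((n + 1 : ℕ) + 2) * ((n + 1 : ℕ) + 1) * a (n + 1 : ℕ))) := by
        rw [setLIntegral_const, Real.volume_Ico]; ring_nf; simp
    _ ≤ _ := setLIntegral_mono' measurableSet_Ico fun q hq =>
        ENNReal.ofReal_le_ofReal (one_div_le_one_div_sq_mul_of_mem_Ico hpos hanti hq)

lemma setLIntegral_Ico_le_ofReal (hpos : ∀ q, 1 ≤ q → 0 < a q)
    (hanti : AntitoneOn a (Ici 1)) (n : ℕ) :
    ∫⁻ q in Ico ((n : ℝ) + 1) (n + 2), ENNReal.ofReal (1 / (q ^ 2 * a q)) ≤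
      ENNReal.ofReal 12 *
        ENNReal.ofReal (1 / (((n + 2 : ℕ) + 2) * ((n + 2 : ℕ) + 1) * a (n + 2 : ℕ))) := by
  rw [← ENNReal.ofReal_mul (by norm_num)]
  calc _ ≤ ∫⁻ _ in Ico ((n : ℝ) + 1) (n + 2),
        ENNReal.ofReal (12 * (1 / (((n + 2 : ℕ) + 2) * ((n + 2 : ℕ) + 1) * a (n + 2 : ℕ)))) :=
        setLIntegral_mono' measurableSet_Ico fun q hq =>
          ENNReal.ofReal_le_ofReal (one_div_sq_mul_le_of_mem_Ico hpos hanti hq)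
    _ = _ := by rw [setLIntegral_const, Real.volume_Ico]; ring_nf; simp

theorem tsum_ne_top_iff_lintegral_Ici_ne_top (hpos : ∀ q, 1 ≤ q → 0 < a q)
    (hanti : AntitoneOn a (Ici 1)) :
    (∑' n : ℕ, ENNReal.ofReal (1 / (((n : ℝ) + 2) * ((n : ℝ) + 1) * a n))) ≠ ⊤ ↔
      (∫⁻ q in Ici (1 : ℝ), ENNReal.ofReal (1 / (q ^ 2 * a q))) ≠ ⊤ := by
  set T : ℕ → ℝ≥0∞ := fun n => ENNReal.ofReal (1 / (((n : ℝ) + 2) * ((n : ℝ) + 1) * a n))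
  have hS : ∑' n, T n ≤ T 0 + ∫⁻ q in Ici (1 : ℝ), ENNReal.ofReal (1 / (q ^ 2 * a q)) := by
    rw [tsum_eq_zero_add' ENNReal.summable, lintegral_Ici_one_eq_tsum_Ico]
    gcongr with n
    exact ofReal_le_setLIntegral_Ico hpos hanti n
  have hI : ∫⁻ q in Ici (1 : ℝ), ENNReal.ofReal (1 / (q ^ 2 * a q)) ≤
      ENNReal.ofReal 12 * ∑' n, T n := by
    rw [lintegral_Ici_one_eq_tsum_Ico]
    calc _ ≤ ∑' n, ENNReal.ofReal 12 * T (n + 2) :=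
          ENNReal.tsum_le_tsum (setLIntegral_Ico_le_ofReal hpos hanti)
      _ = ENNReal.ofReal 12 * ∑' n, T (n + 2) := ENNReal.tsum_mul_left
      _ ≤ _ := mul_le_mul_right
          (ENNReal.tsum_comp_le_tsum_of_injective (add_left_injective 2) T) _
  exact ⟨fun h => ne_top_of_le_ne_top (ENNReal.mul_ne_top ofReal_ne_top h) hI,
    fun h => ne_top_of_le_ne_top (ENNReal.add_ne_top.2 ⟨ofReal_ne_top, h⟩) hS⟩

end IntegralTest

section DeathRates

/-- The paper's rate `λ_{n+2}`, indexed from `n = 0`. -/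
noncomputable def deathRate (a : ℕ → ℝ) (θ : ℝ) (n : ℕ) : ℝ :=
  ((n : ℝ) + 2) / 2 * (((n : ℝ) + 1) * a n + θ)

variable {a : ℕ → ℝ} {θ : ℝ}

lemma one_div_deathRate_le {n : ℕ} (hpos : 0 < a n) (hθ : 0 ≤ θ) :
    1 / deathRate a θ n ≤ 2 * (1 / (((n : ℝ) + 2) * ((n : ℝ) + 1) * a n)) := by
  rw [deathRate, mul_one_div, div_le_div_iff₀ (by positivity) (by positivity)]
  nlinarith [mul_nonneg (n.cast_nonneg : (0 : ℝ) ≤ n) hθ]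

lemma one_div_le_one_div_deathRate {n : ℕ} (hpos : 0 < a n) (hθ : 0 ≤ θ)
    (hθn : θ ≤ ((n : ℝ) + 1) * a n) :
    1 / (((n : ℝ) + 2) * ((n : ℝ) + 1) * a n) ≤ 1 / deathRate a θ n := by
  rw [deathRate]
  refine one_div_le_one_div_of_le (by positivity) ?_
  nlinarith [mul_le_mul_of_nonneg_left hθn (by positivity : (0 : ℝ) ≤ (n : ℝ) + 2)]

lemma one_div_le_one_div_deathRate_of_lt (hpos : ∀ n, 0 < a n) (hanti : Antitone a) {n i : ℕ}
    (hn : ((n : ℝ) + 1) * a n < θ) (hni : n ≤ i) (hin : i ≤ 2 * n) :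
    1 / (3 * θ * ((n : ℝ) + 1)) ≤ 1 / deathRate a θ i := by
  have hi : ((i : ℝ) + 1) * a i ≤ 2 * θ :=
    calc ((i : ℝ) + 1) * a i ≤ (2 * (n : ℝ) + 1) * a n :=
          mul_le_mul (by exact_mod_cast Nat.add_le_add_right hin 1) (hanti hni) (hpos i).le
            (by positivity)
      _ ≤ 2 * θ := by nlinarith [hpos n]
  have hi2 : ((i : ℝ) + 2) / 2 ≤ (n : ℝ) + 1 := by
    have : (i : ℝ) ≤ 2 * n := by exact_mod_cast hin
    linarith
  rw [deathRate]
  refine one_div_le_one_div_of_le (mul_pos (by positivity) (by nlinarith [hpos i])) ?_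
  nlinarith [mul_nonneg (by positivity : (0 : ℝ) ≤ (i : ℝ) + 1) (hpos i).le]

lemma ofReal_le_sum_range_deathRate (hpos : ∀ n, 0 < a n) (hanti : Antitone a) {n : ℕ}
    (hn : ((n : ℝ) + 1) * a n < θ) :
    ENNReal.ofReal (1 / (3 * θ)) ≤
      ∑ i ∈ Finset.range (n + 1), ENNReal.ofReal (1 / deathRate a θ (i + n)) := by
  have hθ : 0 < θ := (mul_pos (by positivity) (hpos n)).trans hn
  calc ENNReal.ofReal (1 / (3 * θ))
      = (n + 1) • ENNReal.ofReal (1 / (3 * θ * ((n : ℝ) + 1))) := by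
        rw [nsmul_eq_mul, ← ENNReal.ofReal_natCast, ← ENNReal.ofReal_mul (by positivity)]
        congr 1
        push_cast
        field_simp
    _ ≤ _ := by
        simpa using Finset.card_nsmul_le_sum (Finset.range (n + 1)) _ _ fun i hi =>
          ENNReal.ofReal_le_ofReal (one_div_le_one_div_deathRate_of_lt hpos hanti hn
            (Nat.le_add_left n i) (by rw [Finset.mem_range] at hi; omega))

theorem tsum_deathRate_ne_top_iff (hpos : ∀ n, 0 < a n) (hanti : Antitone a) (hθ : 0 ≤ θ) :
    (∑' n : ℕ, ENNReal.ofReal (1 / deathRate a θ n)) ≠ ⊤ ↔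
      (∑' n : ℕ, ENNReal.ofReal (1 / (((n : ℝ) + 2) * ((n : ℝ) + 1) * a n))) ≠ ⊤ := by
  constructor
  · intro hL
    have hlarge : ∀ᶠ n : ℕ in atTop, θ ≤ ((n : ℝ) + 1) * a n := by
      by_contra h
      simp only [not_eventually, not_le] at h
      obtain ⟨n, hn⟩ := h.exists
      have hθpos : 0 < θ := (mul_pos (by positivity) (hpos n)).trans hn
      exact hL (tsum_eq_top_of_frequently_le_sum_range_add
        (ENNReal.ofReal_pos.2 (by positivity)).ne'
        (h.mono fun n hn => ⟨n + 1, ofReal_le_sum_range_deathRate hpos hanti hn⟩))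
    exact tsum_ne_top_of_eventually_le (fun _ => ofReal_ne_top)
      (hlarge.mono fun n hn =>
        ENNReal.ofReal_le_ofReal (one_div_le_one_div_deathRate (hpos n) hθ hn)) hL
  · intro hT
    refine ne_top_of_le_ne_top (ENNReal.mul_ne_top (ofReal_ne_top (r := 2)) hT) ?_
    calc _ ≤ ∑' n : ℕ, ENNReal.ofReal 2 *
          ENNReal.ofReal (1 / (((n : ℝ) + 2) * ((n : ℝ) + 1) * a n)) :=
          ENNReal.tsum_le_tsum fun n => by
            rw [← ENNReal.ofReal_mul zero_le_two]
            exact ENNReal.ofReal_le_ofReal (one_div_deathRate_le (hpos n) hθ)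
      _ = _ := ENNReal.tsum_mul_left

end DeathRates

section Moments

variable {Ω : Type*} [MeasurableSpace Ω] {ℙ : Measure Ω} {W : Ω → ℝ}

lemma integrable_one_sub_rpow [IsFiniteMeasure ℙ] (hWm : Measurable W)
    (hW : ∀ ω, W ω ∈ Icc (0 : ℝ) 1) {q : ℝ} (hq : 0 ≤ q) :
    Integrable (fun ω => (1 - W ω) ^ q) ℙ := by
  refine (integrable_const 1).mono'
    ((measurable_const.sub hWm).pow measurable_const).aestronglyMeasurable
    (Eventually.of_forall fun ω => ?_)
  rw [Real.norm_eq_abs, abs_of_nonneg (Real.rpow_nonneg (by linarith [(hW ω).2]) q)]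
  exact Real.rpow_le_one (by linarith [(hW ω).2]) (by linarith [(hW ω).1]) hq

lemma aMom_antitoneOn [IsFiniteMeasure ℙ] (hWm : Measurable W)
    (hW : ∀ ω, W ω ∈ Icc (0 : ℝ) 1) : AntitoneOn (aMom ℙ W) (Ici 0) :=
  fun q hq r hr hqr => integral_mono (integrable_one_sub_rpow hWm hW (hq.trans hqr))
    (integrable_one_sub_rpow hWm hW hq) fun ω =>
      Real.rpow_le_rpow_of_exponent_ge' (by linarith [(hW ω).2]) (by linarith [(hW ω).1]) hq hqr

lemma aMom_pos [IsProbabilityMeasure ℙ] (hWm : Measurable W) (hW : ∀ ω, W ω ∈ Icc (0 : ℝ) 1)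
    (h1 : ℙ {ω | W ω = 1} < 1) {q : ℝ} (hq : 0 ≤ q) : 0 < aMom ℙ W q := by
  rw [aMom, integral_pos_iff_support_of_nonneg
    (fun ω => Real.rpow_nonneg (by linarith [(hW ω).2]) q) (integrable_one_sub_rpow hWm hW hq)]
  have hsub : {ω | W ω = 1}ᶜ ⊆ Function.support fun ω => (1 - W ω) ^ q := fun ω hω =>
    (Real.rpow_pos_of_pos (by linarith [lt_of_le_of_ne (hW ω).2 hω]) q).ne'
  refine lt_of_lt_of_le ?_ (measure_mono hsub)
  rw [prob_compl_eq_one_sub (measurableSet_eq_fun hWm measurable_const)]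
  exact tsub_pos_iff_lt.mpr h1

end Moments

theorem stmt17 {Ω : Type*} [MeasurableSpace Ω] (ℙ : Measure Ω) [IsProbabilityMeasure ℙ]
    (W : Ω → ℝ) (hWm : Measurable W) (hrange : ∀ ω, W ω ∈ Set.Icc (0:ℝ) 1)
    (h1 : ℙ {ω | W ω = 1} < 1) :
    ((∑' n : ℕ, ENNReal.ofReal
        (1 / (((n : ℝ) + 2) * ((n : ℝ) + 1) * aMom ℙ W (n : ℝ)))) ≠ ⊤ ↔
      (∫⁻ q in Set.Ici (1:ℝ), ENNReal.ofReal (1 / (q ^ 2 * aMom ℙ W q))) ≠ ⊤) ∧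
    ∀ θ : ℝ, 0 ≤ θ →
      ((∑' n : ℕ, ENNReal.ofReal
          (1 / ((((n : ℝ) + 2) / 2) * (((n : ℝ) + 1) * aMom ℙ W (n : ℝ) + θ)))) ≠ ⊤ ↔
        (∫⁻ q in Set.Ici (1:ℝ), ENNReal.ofReal (1 / (q ^ 2 * aMom ℙ W q))) ≠ ⊤) := by
  have hpos : ∀ q : ℝ, 0 ≤ q → 0 < aMom ℙ W q := fun q hq => aMom_pos hWm hrange h1 hq
  have hanti : AntitoneOn (aMom ℙ W) (Ici 0) := aMom_antitoneOn hWm hrange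
  have hseries := tsum_ne_top_iff_lintegral_Ici_ne_top (fun q hq => hpos q (by linarith))
    (hanti.mono (Ici_subset_Ici.2 zero_le_one))
  have hseq : Antitone fun n : ℕ => aMom ℙ W n := fun m n hmn =>
    hanti (mem_Ici.2 m.cast_nonneg) (mem_Ici.2 n.cast_nonneg) (Nat.cast_le.2 hmn)
  exact ⟨hseries, fun θ hθ =>
    (tsum_deathRate_ne_top_iff (fun n => hpos n n.cast_nonneg) hseq hθ).trans hseries⟩
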